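/- Let n ≥ 2 and let 0 < d < n be an odd integer. For every polynomial p in n real variables, the function x ↦ p(x/|x|²) · |x|^{−(n−d)}, defined on ℝⁿ ∖ {0}, lies in the ℝ-linear span of the set of functions on ℝⁿ ∖ {0} obtained by applying a finite sequence of first-order partial derivatives ∂_{j₁} ∂_{j₂} ⋯ ∂_{j_r} (r ≥ 0, each j_i ∈ {1, …, n}) to the function x ↦ |x|^{−(n−d)}. -/

import Mathlib

open MeasureTheory

/-- The partial derivative `∂ⱼ g` of a function `g : ℝⁿ → ℝ`. -/
noncomputable def partialDeriv' (n : ℕ) (j : Fin n)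
    (g : EuclideanSpace ℝ (Fin n) → ℝ) : EuclideanSpace ℝ (Fin n) → ℝ :=
  fun x => fderiv ℝ g x (EuclideanSpace.single j 1)

/-- Iterated partial derivatives `∂_{j₁} ∂_{j₂} ⋯ ∂_{j_r} g`, given by a list of coordinate
directions. -/
noncomputable def iterPartialDeriv (n : ℕ) :
    List (Fin n) → (EuclideanSpace ℝ (Fin n) → ℝ) → EuclideanSpace ℝ (Fin n) → ℝ
  | [], g => g
  | j :: L, g => iterPartialDeriv n L (partialDeriv' n j g)

/-! Write `α = n - d`. The Kelvin transform sends `x ↦ x^β |x|^{-α}` to `x ↦ x^β |x|^{-α-2|β|}`,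
so it suffices to show that `q(x) |x|^{-α-2k}` lies in the span for every polynomial `q` of
degree at most `k`. This goes by induction on `k`, using two identities off the origin:
`∂ⱼ (q |x|^c) = (∂ⱼ q) |x|^c + c xⱼ q |x|^{c-2}` trades a derivative for a factor `xⱼ` and two
more powers of `|x|` in the denominator, and `Σⱼ ∂ⱼ (xⱼ |x|^{c-2}) = (n + c - 2) |x|^{c-2}`
produces the pure power. For `c = -α - 2k` the constants `c` and `n + c - 2 = d - 2k - 2` never
vanish, because `d < n` and `d` is odd. -/

open MvPolynomial Set
open scoped ContDiff

theorem hasFDerivAt_norm_rpow_of_ne_zero {F : Type*} [NormedAddCommGroup F]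
    [InnerProductSpace ℝ F] (c : ℝ) {x : F} (hx : x ≠ 0) :
    HasFDerivAt (fun y : F => ‖y‖ ^ c) ((c * ‖x‖ ^ (c - 2)) • innerSL ℝ x) x := by
  have hsq_rpow (y : F) (t : ℝ) : (‖y‖ ^ 2) ^ t = ‖y‖ ^ (2 * t) := by
    rw [← Real.rpow_natCast, ← Real.rpow_mul (norm_nonneg y), Nat.cast_ofNat]
  have h := (hasStrictFDerivAt_norm_sq x).hasFDerivAt.rpow_const (p := c / 2)
    (.inl (by positivity))
  simp only [hsq_rpow, mul_div_cancel₀ c two_ne_zero] at h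
  convert h using 1
  ext v
  simp only [smul_apply, coe_innerSL_apply, smul_eq_mul, nsmul_eq_mul,
    Nat.cast_ofNat, show 2 * (c / 2 - 1) = c - 2 by ring]
  ring


theorem MvPolynomial.hasFDerivAt_eval_euclidean {ι : Type*} [Fintype ι]
    (q : MvPolynomial ι ℝ) (x : EuclideanSpace ℝ ι) :
    HasFDerivAt (fun y : EuclideanSpace ℝ ι => eval y.ofLp q)
      (∑ i, eval x.ofLp (pderiv i q) • EuclideanSpace.proj (𝕜 := ℝ) i) x := by
  classical
  induction q using MvPolynomial.induction_on with
  | C a => simpa using hasFDerivAt_const a x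
  | add p q hp hq =>
    simp only [map_add]
    exact (hp.add hq).congr_fderiv (by simp [add_smul, Finset.sum_add_distrib])
  | mul_X p j hp =>
    simp only [map_mul, eval_X]
    refine (hp.mul (EuclideanSpace.proj (𝕜 := ℝ) j).hasFDerivAt).congr_fderiv ?_
    ext v
    simp [Pi.single_apply, apply_ite, ite_mul, add_mul, Finset.sum_add_distrib, Finset.mul_sum,
      mul_assoc]

theorem contDiffOn_norm_rpow {F : Type*} [NormedAddCommGroup F] [InnerProductSpace ℝ F]
    (c : ℝ) : ContDiffOn ℝ ∞ (fun y : F => ‖y‖ ^ c) {0}ᶜ :=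
  fun _ hx => ((contDiffAt_norm ℝ hx).rpow_const_of_ne (norm_ne_zero_iff.mpr hx)).contDiffWithinAt

section
variable {n : ℕ} {U : Set (EuclideanSpace ℝ (Fin n))}

theorem eqOn_partialDeriv'_of_eqOn (hU : IsOpen U) {f g : EuclideanSpace ℝ (Fin n) → ℝ}
    (hfg : EqOn f g U) (j : Fin n) : EqOn (partialDeriv' n j f) (partialDeriv' n j g) U :=
  fun _ hx => by
    rw [partialDeriv', partialDeriv', Filter.EventuallyEq.fderiv_eq (hfg.eventuallyEq_of_mem
      (hU.mem_nhds hx))]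

theorem iterPartialDeriv_append_singleton (j : Fin n) :
    ∀ (L : List (Fin n)) (g : EuclideanSpace ℝ (Fin n) → ℝ),
      iterPartialDeriv n (L ++ [j]) g = partialDeriv' n j (iterPartialDeriv n L g)
  | [], _ => rfl
  | i :: L, g => iterPartialDeriv_append_singleton j L (partialDeriv' n i g)

theorem contDiffOn_partialDeriv' (hU : IsOpen U) {g : EuclideanSpace ℝ (Fin n) → ℝ}
    (hg : ContDiffOn ℝ ∞ g U) (j : Fin n) : ContDiffOn ℝ ∞ (partialDeriv' n j g) U :=
  (hg.fderiv_of_isOpen hU (by simp)).clm_apply contDiffOn_const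

theorem contDiffOn_iterPartialDeriv (hU : IsOpen U) :
    ∀ (L : List (Fin n)) {g : EuclideanSpace ℝ (Fin n) → ℝ}, ContDiffOn ℝ ∞ g U →
      ContDiffOn ℝ ∞ (iterPartialDeriv n L g) U
  | [], _, hg => hg
  | j :: L, _, hg => contDiffOn_iterPartialDeriv hU L (contDiffOn_partialDeriv' hU hg j)

variable {g : EuclideanSpace ℝ (Fin n) → ℝ}

theorem contDiffOn_of_mem_span_iterPartialDeriv (hU : IsOpen U) (hg : ContDiffOn ℝ ∞ g U)
    {G : EuclideanSpace ℝ (Fin n) → ℝ}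
    (hG : G ∈ Submodule.span ℝ (range fun L => iterPartialDeriv n L g)) :
    ContDiffOn ℝ ∞ G U := by
  induction hG using Submodule.span_induction with
  | mem _ h => obtain ⟨L, rfl⟩ := h; exact contDiffOn_iterPartialDeriv hU L hg
  | zero => exact contDiffOn_const
  | add _ _ _ _ h₁ h₂ => exact h₁.add h₂
  | smul a _ _ h => exact h.const_smul a

theorem exists_mem_span_iterPartialDeriv_eqOn_partialDeriv' (hU : IsOpen U)
    (hg : ContDiffOn ℝ ∞ g U) {G : EuclideanSpace ℝ (Fin n) → ℝ}
    (hG : G ∈ Submodule.span ℝ (range fun L => iterPartialDeriv n L g)) (j : Fin n) :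
    ∃ G' ∈ Submodule.span ℝ (range fun L => iterPartialDeriv n L g),
      EqOn G' (partialDeriv' n j G) U := by
  have hdiff {f} (hf : f ∈ Submodule.span ℝ (range fun L => iterPartialDeriv n L g)) {x}
      (hx : x ∈ U) : DifferentiableAt ℝ f x :=
    ((contDiffOn_of_mem_span_iterPartialDeriv hU hg hf).differentiableOn (by simp) x
      hx).differentiableAt (hU.mem_nhds hx)
  induction hG using Submodule.span_induction with
  | mem _ h =>
    obtain ⟨L, rfl⟩ := h
    exact ⟨_, Submodule.subset_span ⟨L ++ [j], rfl⟩,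
      fun _ _ => by simp only [iterPartialDeriv_append_singleton]⟩
  | zero => exact ⟨0, zero_mem _, fun _ _ => by simp [partialDeriv']⟩
  | add f₁ f₂ hf₁ hf₂ h₁ h₂ =>
    obtain ⟨F₁, hF₁, hEq₁⟩ := h₁
    obtain ⟨F₂, hF₂, hEq₂⟩ := h₂
    refine ⟨F₁ + F₂, add_mem hF₁ hF₂, fun x hx => ?_⟩
    simp [partialDeriv', fderiv_add (hdiff hf₁ hx) (hdiff hf₂ hx), hEq₁ hx, hEq₂ hx]
  | smul a f hf h =>
    obtain ⟨F, hF, hEq⟩ := h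
    exact ⟨a • F, Submodule.smul_mem _ a hF, fun x hx => by
      simp [partialDeriv', fderiv_const_smul (hdiff hf hx), hEq hx]⟩

end

section
variable {n : ℕ} {α : ℝ}

noncomputable def evalMulNormRpow (n : ℕ) (c : ℝ) :
    MvPolynomial (Fin n) ℝ →ₗ[ℝ] EuclideanSpace ℝ (Fin n) → ℝ where
  toFun q y := eval y.ofLp q * ‖y‖ ^ c
  map_add' p q := by ext y; simp [add_mul]
  map_smul' a q := by ext y; simp [mul_assoc]

theorem evalMulNormRpow_apply (c : ℝ) (q : MvPolynomial (Fin n) ℝ)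
    (y : EuclideanSpace ℝ (Fin n)) : evalMulNormRpow n c q y = eval y.ofLp q * ‖y‖ ^ c :=
  rfl

theorem partialDeriv'_evalMulNormRpow (c : ℝ) (q : MvPolynomial (Fin n) ℝ) (j : Fin n)
    {x : EuclideanSpace ℝ (Fin n)} (hx : x ≠ 0) :
    partialDeriv' n j (evalMulNormRpow n c q) x =
      evalMulNormRpow n c (pderiv j q) x + c * evalMulNormRpow n (c - 2) (X j * q) x := by
  have h : HasFDerivAt (evalMulNormRpow n c q) _ x :=
    (hasFDerivAt_eval_euclidean q x).mul (hasFDerivAt_norm_rpow_of_ne_zero c hx)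
  rw [partialDeriv', h.fderiv]
  simp [evalMulNormRpow_apply, EuclideanSpace.inner_single_right]
  ring

-- Functions on all of `ℝⁿ`, so that `partialDeriv'` applies to them; membership only depends
-- on the values off the origin, where the span of the theorem lives.
def rieszSpan (n : ℕ) (α : ℝ) : Submodule ℝ (EuclideanSpace ℝ (Fin n) → ℝ) :=
  (Submodule.span ℝ {g : {x : EuclideanSpace ℝ (Fin n) // x ≠ 0} → ℝ |
      ∃ L : List (Fin n), g = fun x => iterPartialDeriv n L (fun y => ‖y‖ ^ (-α)) x.1}).comap
    (LinearMap.funLeft ℝ ℝ Subtype.val)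

theorem mem_rieszSpan_iff {f : EuclideanSpace ℝ (Fin n) → ℝ} :
    f ∈ rieszSpan n α ↔ ∃ G ∈ Submodule.span ℝ
      (range fun L => iterPartialDeriv n L fun y => ‖y‖ ^ (-α)), EqOn G f {0}ᶜ := by
  have hgen : {g : {x : EuclideanSpace ℝ (Fin n) // x ≠ 0} → ℝ |
      ∃ L : List (Fin n), g = fun x => iterPartialDeriv n L (fun y => ‖y‖ ^ (-α)) x.1} =
      LinearMap.funLeft ℝ ℝ Subtype.val '' range fun L => iterPartialDeriv n L
        fun y => ‖y‖ ^ (-α) := by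
    ext; simp [eq_comm]; rfl
  simp only [rieszSpan, Submodule.mem_comap, hgen, Submodule.span_image, Submodule.mem_map]
  refine exists_congr fun G => and_congr_right fun _ => ⟨fun h x hx => ?_, fun h => ?_⟩
  · exact congrFun h ⟨x, hx⟩
  · exact funext fun x => h x.2

theorem mem_rieszSpan_of_eqOn {f g : EuclideanSpace ℝ (Fin n) → ℝ} (hf : f ∈ rieszSpan n α)
    (hfg : EqOn f g {0}ᶜ) : g ∈ rieszSpan n α := by
  obtain ⟨G, hG, hGf⟩ := mem_rieszSpan_iff.1 hf
  exact mem_rieszSpan_iff.2 ⟨G, hG, hGf.trans hfg⟩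

theorem norm_rpow_neg_mem_rieszSpan : (fun y => ‖y‖ ^ (-α)) ∈ rieszSpan n α :=
  mem_rieszSpan_iff.2 ⟨_, Submodule.subset_span ⟨[], rfl⟩, eqOn_refl _ _⟩

theorem partialDeriv'_mem_rieszSpan {f : EuclideanSpace ℝ (Fin n) → ℝ} (hf : f ∈ rieszSpan n α)
    (j : Fin n) : partialDeriv' n j f ∈ rieszSpan n α := by
  obtain ⟨G, hG, hGf⟩ := mem_rieszSpan_iff.1 hf
  obtain ⟨G', hG', hG'G⟩ := exists_mem_span_iterPartialDeriv_eqOn_partialDeriv'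
    isOpen_compl_singleton (contDiffOn_norm_rpow _) hG j
  exact mem_rieszSpan_iff.2
    ⟨G', hG', hG'G.trans (eqOn_partialDeriv'_of_eqOn isOpen_compl_singleton hGf j)⟩

theorem evalMulNormRpow_one (c : ℝ) :
    evalMulNormRpow n c 1 = fun y => ‖y‖ ^ c := by
  ext y; simp [evalMulNormRpow_apply]

theorem evalMulNormRpow_X_mul_mem_rieszSpan {c : ℝ} (hc : c ≠ 0) {q : MvPolynomial (Fin n) ℝ}
    {j : Fin n} (hq : evalMulNormRpow n c q ∈ rieszSpan n α)
    (hq' : evalMulNormRpow n c (pderiv j q) ∈ rieszSpan n α) :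
    evalMulNormRpow n (c - 2) (X j * q) ∈ rieszSpan n α := by
  refine mem_rieszSpan_of_eqOn
    (Submodule.smul_mem _ c⁻¹ (sub_mem (partialDeriv'_mem_rieszSpan hq j) hq')) fun x hx => ?_
  simp [partialDeriv'_evalMulNormRpow _ _ _ hx, hc]

theorem evalMulNormRpow_sub_two_one_mem_rieszSpan {c : ℝ} (hc : c ≠ 0) (hcn : c + n - 2 ≠ 0)
    (h : evalMulNormRpow n c 1 ∈ rieszSpan n α) :
    evalMulNormRpow n (c - 2) 1 ∈ rieszSpan n α := by
  have hX (j : Fin n) : evalMulNormRpow n (c - 2) (X j) ∈ rieszSpan n α := by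
    simpa using evalMulNormRpow_X_mul_mem_rieszSpan (j := j) hc h (by simp)
  refine mem_rieszSpan_of_eqOn (Submodule.smul_mem _ (c + n - 2)⁻¹
    (sum_mem (t := Finset.univ) fun j _ => partialDeriv'_mem_rieszSpan (hX j) j)) fun x hx => ?_
  have hx' : 0 < ‖x‖ := norm_pos_iff.2 hx
  have hdiv : ∑ j, partialDeriv' n j (evalMulNormRpow n (c - 2) (X j)) x =
      (c + n - 2) * ‖x‖ ^ (c - 2) := by
    simp only [partialDeriv'_evalMulNormRpow _ _ _ hx, evalMulNormRpow_apply, pderiv_X_self,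
      map_one, map_mul, eval_X, one_mul]
    simp only [Finset.sum_add_distrib, ← Finset.mul_sum, ← Finset.sum_mul, ← sq,
      ← EuclideanSpace.real_norm_sq_eq, Finset.sum_const, Finset.card_univ, Fintype.card_fin,
      nsmul_eq_mul, Real.rpow_sub hx' (c - 2), Real.rpow_two]
    field_simp
    ring
  simp [Finset.sum_apply, hdiv, hcn, evalMulNormRpow_apply]

theorem evalMulNormRpow_mem_rieszSpan (hα : 0 < α) (hαn : ∀ k : ℕ, α + 2 * k + 2 ≠ n) :
    ∀ (k : ℕ) {q : MvPolynomial (Fin n) ℝ}, q.totalDegree ≤ k →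
      evalMulNormRpow n (-(α + 2 * k)) q ∈ rieszSpan n α
  | 0, q, hq => by
    rw [Nat.le_zero, totalDegree_eq_zero_iff_eq_C] at hq
    rw [hq, C_eq_smul_one, map_smul]
    simpa [evalMulNormRpow_one] using
      Submodule.smul_mem _ (coeff 0 q) (norm_rpow_neg_mem_rieszSpan (n := n) (α := α))
  | k + 1, q, hq => by
    have hc : -(α + 2 * k) ≠ 0 := by have : (0 : ℝ) ≤ k := k.cast_nonneg; linarith
    have hexp : -(α + 2 * ↑(k + 1)) = -(α + 2 * k) - 2 := by push_cast; ring
    rw [hexp, q.as_sum, map_sum]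
    refine sum_mem fun v hv => ?_
    have hv_deg : v.degree ≤ k + 1 := (le_totalDegree hv).trans hq
    rcases eq_or_ne v 0 with rfl | hv0
    · rw [← C_apply, C_eq_smul_one, map_smul]
      exact Submodule.smul_mem _ _ (evalMulNormRpow_sub_two_one_mem_rieszSpan hc
        (fun h => hαn k (by linarith)) (evalMulNormRpow_mem_rieszSpan hα hαn k (by simp)))
    obtain ⟨j, hj⟩ : ∃ j, v j ≠ 0 := Finsupp.ne_iff.1 hv0
    have hsplit : v = Finsupp.single j 1 + (v - Finsupp.single j 1) :=
      (add_tsub_cancel_of_le (Finsupp.single_le_iff.2 (Nat.one_le_iff_ne_zero.2 hj))).symm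
    have hdeg : (v - Finsupp.single j 1).degree ≤ k := by
      rw [hsplit, map_add, Finsupp.degree_single] at hv_deg; omega
    rw [hsplit, monomial_single_add, pow_one]
    refine evalMulNormRpow_X_mul_mem_rieszSpan hc
      (evalMulNormRpow_mem_rieszSpan hα hαn k ((totalDegree_monomial_le _ _).trans hdeg)) ?_
    rw [pderiv_monomial]
    exact evalMulNormRpow_mem_rieszSpan hα hαn k ((totalDegree_monomial_le _ _).trans
      ((Finsupp.degree_mono tsub_le_self).trans hdeg))

theorem eval_div_norm_sq_monomial_mul_norm_rpow (α : ℝ) (v : Fin n →₀ ℕ) (a : ℝ)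
    {y : EuclideanSpace ℝ (Fin n)} (hy : y ≠ 0) :
    eval (fun j => y j / ‖y‖ ^ 2) (monomial v a) * ‖y‖ ^ (-α) =
      evalMulNormRpow n (-(α + 2 * v.degree)) (monomial v a) y := by
  have hy' : 0 < ‖y‖ := norm_pos_iff.2 hy
  have hprod : (v.prod fun j e => (y j / ‖y‖ ^ 2) ^ e) =
      (v.prod fun j e => y j ^ e) / (‖y‖ ^ 2) ^ v.degree := by
    simp only [Finsupp.prod, div_pow, Finset.prod_div_distrib, Finset.prod_pow_eq_pow_sum,
      Finsupp.degree_apply]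
  have hpow : ‖y‖ ^ (2 * v.degree : ℝ) = (‖y‖ ^ 2) ^ v.degree := by
    rw [← pow_mul, ← Real.rpow_natCast]; push_cast; rfl
  rw [evalMulNormRpow_apply, eval_monomial, eval_monomial, hprod, neg_add, Real.rpow_add hy',
    Real.rpow_neg hy'.le (2 * _), hpow]
  ring

theorem kelvin_mem_rieszSpan (hα : 0 < α) (hαn : ∀ k : ℕ, α + 2 * k + 2 ≠ n)
    (p : MvPolynomial (Fin n) ℝ) :
    (fun y : EuclideanSpace ℝ (Fin n) => eval (fun j => y j / ‖y‖ ^ 2) p * ‖y‖ ^ (-α)) ∈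
      rieszSpan n α := by
  induction p using MvPolynomial.induction_on' with
  | monomial v a =>
    exact mem_rieszSpan_of_eqOn (evalMulNormRpow_mem_rieszSpan hα hαn _
      (totalDegree_monomial_le v a)) fun y hy =>
        (eval_div_norm_sq_monomial_mul_norm_rpow α v a hy).symm
  | add p q hp hq => simpa only [map_add, add_mul, Pi.add_def] using add_mem hp hq

end

theorem kelvin_poly_riesz_in_span_of_derivs_general
    (n d : ℕ) (hdn : d < n) (hdodd : Odd d)
    (p : MvPolynomial (Fin n) ℝ) :
    (fun x : {x : EuclideanSpace ℝ (Fin n) // x ≠ 0} =>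
        MvPolynomial.eval (fun j : Fin n => x.1 j / ‖x.1‖ ^ 2) p *
          ‖x.1‖ ^ (-((n : ℝ) - (d : ℝ)))) ∈
      Submodule.span ℝ
        {g : {x : EuclideanSpace ℝ (Fin n) // x ≠ 0} → ℝ |
          ∃ L : List (Fin n),
            g = fun x : {x : EuclideanSpace ℝ (Fin n) // x ≠ 0} =>
              iterPartialDeriv n L
                (fun y : EuclideanSpace ℝ (Fin n) => ‖y‖ ^ (-((n : ℝ) - (d : ℝ)))) x.1} := by
  have hα : (0 : ℝ) < n - d := sub_pos.2 (Nat.cast_lt.2 hdn)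
  have hαn (k : ℕ) : (n - d : ℝ) + 2 * k + 2 ≠ n := fun h =>
    Nat.not_even_iff_odd.2 hdodd
      ⟨k + 1, by exact_mod_cast (by linarith : (d : ℝ) = k + 1 + (k + 1))⟩
  exact kelvin_mem_rieszSpan hα hαn p

/-- **Kelvin-transformed polynomial multiples of the Riesz kernel lie in the span of its
derivatives, `d` odd.** For `0 < d < n` odd and any polynomial `p` in `n` variables, the
function `x ↦ p(x/|x|²) · |x|^{-(n-d)}` on `ℝⁿ ∖ {0}` is a finite ℝ-linear combination of
iterated partial derivatives of `x ↦ |x|^{-(n-d)}`. -/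
theorem kelvin_poly_riesz_in_span_of_derivs
    (n d : ℕ) (hn : 2 ≤ n) (hd0 : 0 < d) (hdn : d < n) (hdodd : Odd d)
    (p : MvPolynomial (Fin n) ℝ) :
    (fun x : {x : EuclideanSpace ℝ (Fin n) // x ≠ 0} =>
        MvPolynomial.eval (fun j : Fin n => x.1 j / ‖x.1‖ ^ 2) p *
          ‖x.1‖ ^ (-((n : ℝ) - (d : ℝ)))) ∈
      Submodule.span ℝ
        {g : {x : EuclideanSpace ℝ (Fin n) // x ≠ 0} → ℝ |
          ∃ L : List (Fin n),
            g = fun x : {x : EuclideanSpace ℝ (Fin n) // x ≠ 0} =>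
              iterPartialDeriv n L
                (fun y : EuclideanSpace ℝ (Fin n) => ‖y‖ ^ (-((n : ℝ) - (d : ℝ)))) x.1} :=
  kelvin_poly_riesz_in_span_of_derivs_general n d hdn hdodd p
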